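/- Single-index special case of the polynomial comparison: if E is a measurable subset of B_1(0) in R^n with H^n(E) >= A > 0, P(x) = sum_{|p| <= k} c_p x^p is a single real-valued polynomial of degree at most k, and |c_{p'}| >= delta for some multi-index p', then integral over E of |P(x)|^q dx >= C(n,k,q,A) * delta^q. -/

import Mathlib

/-!
A nonzero polynomial vanishes only on a null set (induction on the number of variables, by
Fubini), so for every coefficient vector `c` on the unit sphere the sublevel sets
`{x ∈ B₁ | |P_c x| ≤ t}` have small measure once `t` is small. On the unit ball `c ↦ P_c x` is
Lipschitz uniformly in `x`, so compactness of the sphere makes `t` independent of `c`. By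
homogeneity, `|P_c| ≥ t ‖c‖ ≥ t δ` on at least half of `E`, whence
`∫_E |P_c|^q ≥ (A / 2) t^q δ^q`.
-/

open MeasureTheory Metric Set Filter Finset Topology

noncomputable section

abbrev Euc (n : ℕ) : Type := EuclideanSpace ℝ (Fin n)

noncomputable def Gd {Q : ℕ} {α : Type*} (d : α → α → ℝ) (a b : Fin Q → α) : ℝ :=
  ⨅ σ : Equiv.Perm (Fin Q), Real.sqrt (∑ i, d (a i) (b (σ i)) ^ 2)

noncomputable def GG {Q m : ℕ} (a b : Fin Q → Euc m) : ℝ :=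
  Gd (fun x y => ‖x - y‖) a b

/-- Multi-indices in `n` variables of total degree at most `k`. -/
abbrev MIdx (n k : ℕ) := {p : Fin n → Fin (k + 1) // ∑ i, (p i : ℕ) ≤ k}

def mdeg {n k : ℕ} (p : MIdx n k) : ℕ := ∑ i, (p.1 i : ℕ)

def pfact {n k : ℕ} (p : MIdx n k) : ℕ := ∏ t, Nat.factorial (p.1 t)

/-- Coefficient families for `Q`-valued polynomials `ℝ^n → A_Q(ℝ^m)` of degree `≤ k`. -/
abbrev Coeffs (n m Q k : ℕ) := Fin Q → Fin m → MIdx n k → ℝ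

/-- Evaluation of the `Q`-valued polynomial with coefficients `a`, centred at `x0`:
`P^{i,j}(x) = ∑_{|p| ≤ k} (a^{i,j}_p / p!) (x - x0)^p`. -/
noncomputable def evalQ {n m Q k : ℕ} (x0 : Euc n) (a : Coeffs n m Q k) (x : Euc n) :
    Fin Q → Euc m :=
  fun i => (WithLp.equiv 2 (Fin m → ℝ)).symm
    fun j => ∑ p : MIdx n k, (a i j p / (pfact p : ℝ)) * ∏ t, (x t - x0 t) ^ ((p.1 t : ℕ))

/-- The `G`-distance between two unordered tuples of coefficient vectors,
restricted to multi-indices in `S` (the same permutation is used for all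
coefficients of a given sheet). -/
noncomputable def Gcoef {n m Q k : ℕ} (S : Finset (MIdx n k)) (a b : Coeffs n m Q k) : ℝ :=
  Gd (fun f g => Real.sqrt (∑ j, ∑ p ∈ S, (f j p - g j p) ^ 2)) a b

/-- `inf_{P ∈ 𝒫_k} ∫_{Ω ∩ B_ρ(x0)} G(u, P)^q`. -/
noncomputable def campInf {n m Q : ℕ} (k : ℕ) (Ω : Set (Euc n)) (u : Euc n → Fin Q → Euc m)
    (qe : ℝ) (x0 : Euc n) (ρ : ℝ) : ℝ :=
  ⨅ a : Coeffs n m Q k, ∫ x in Ω ∩ ball x0 ρ, GG (u x) (evalQ x0 a x) ^ qe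

/-- `Ω` is `A`-weighted: `H^n(Ω ∩ B_ρ(x)) ≥ A ρ^n` for all `x ∈ closure Ω`,
`0 < ρ ≤ diam Ω`. -/
def AWeighted {n : ℕ} (A : ℝ) (Ω : Set (Euc n)) : Prop :=
  ∀ x ∈ closure Ω, ∀ ρ : ℝ, 0 < ρ → ρ ≤ Metric.diam Ω →
    A * ρ ^ n ≤ (volume (Ω ∩ ball x ρ)).toReal

/-- `a` is an optimal degree-`≤ k` `Q`-valued polynomial approximation of `u`
on `Ω ∩ B_ρ(x0)` in `L^q`. -/
def IsOptimalAt {n m Q : ℕ} (k : ℕ) (Ω : Set (Euc n)) (u : Euc n → Fin Q → Euc m)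
    (qe : ℝ) (x0 : Euc n) (ρ : ℝ) (a : Coeffs n m Q k) : Prop :=
  ∀ b : Coeffs n m Q k,
    ∫ x in Ω ∩ ball x0 ρ, GG (u x) (evalQ x0 a x) ^ qe ≤
      ∫ x in Ω ∩ ball x0 ρ, GG (u x) (evalQ x0 b x) ^ qe

/-- `K` bounds the Campanato seminorm `|||u|||_{k,q,λ}` of `u` on `Ω`, i.e.
`inf_{P ∈ 𝒫_k} ∫_{Ω ∩ B_ρ(x0)} G(u,P)^q ≤ K^q ρ^λ` for all admissible `x0, ρ`. -/
def CampBound {n m Q : ℕ} (k : ℕ) (Ω : Set (Euc n)) (u : Euc n → Fin Q → Euc m)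
    (qe lam K : ℝ) : Prop :=
  ∀ x0 ∈ closure Ω, ∀ ρ : ℝ, 0 < ρ → ρ ≤ Metric.diam Ω →
    campInf k Ω u qe x0 ρ ≤ K ^ qe * ρ ^ lam

/-- Whitney-type description of `C^{k,α}` regularity of a `Q`-valued function on `S`,
with Hölder "seminorm" at most `L`: there is a family of Taylor coefficients whose
zero-order part is the value, whose Taylor polynomials approximate to order `k+α`, and
whose top-order coefficients are `α`-Hölder in the `G`-distance. -/
def QCkHolder {n m Q : ℕ} (k : ℕ) (S : Set (Euc n)) (v : Euc n → Fin Q → Euc m)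
    (α L : ℝ) : Prop :=
  ∃ a : Euc n → Coeffs n m Q k,
    (∀ x ∈ S, GG (v x) (evalQ x (a x) x) = 0) ∧
    (∀ x ∈ S, ∀ y ∈ S, GG (v y) (evalQ x (a x) y) ≤ L * dist y x ^ ((k : ℝ) + α)) ∧
    (∀ x ∈ S, ∀ y ∈ S,
      Gcoef (Finset.univ.filter fun p => mdeg p = k) (a x) (a y) ≤ L * dist x y ^ α)

open scoped NNReal ENNReal

theorem MeasureTheory.exists_pos_measure_abs_le_lt {X : Type*} [MeasurableSpace X]
    {μ : Measure X} {S : Set X} (hS : MeasurableSet S) (hμS : μ S ≠ ∞) {g : X → ℝ}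
    (hg : Measurable g) (hzero : μ {x ∈ S | g x = 0} = 0) {ε : ℝ≥0∞} (hε : 0 < ε) :
    ∃ s > 0, μ {x ∈ S | |g x| ≤ s} < ε := by
  have hinter : μ (⋂ r > 0, {x ∈ S | |g x| ≤ r}) = 0 := by
    refine measure_mono_null (fun x hx => ?_) hzero
    simp only [mem_iInter] at hx
    exact ⟨(hx 1 one_pos).1,
      abs_nonpos_iff.mp (le_of_forall_gt_imp_ge_of_dense fun r hr => (hx r hr).2)⟩
  have hshrink := tendsto_measure_biInter_gt (μ := μ) (s := fun r => {x ∈ S | |g x| ≤ r})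
    (fun r _ => (hS.inter (measurableSet_le hg.abs measurable_const)).nullMeasurableSet)
    (fun _ _ _ hij x hx => ⟨hx.1, hx.2.trans hij⟩)
    ⟨1, one_pos, measure_ne_top_of_subset (sep_subset S _) hμS⟩
  rw [hinter] at hshrink
  obtain ⟨s, hsμ, hs⟩ :=
    ((hshrink.eventually (gt_mem_nhds hε)).and self_mem_nhdsWithin).exists
  exact ⟨s, hs, hsμ⟩

theorem IsCompact.exists_pos_forall_measure_abs_le_lt {X C : Type*} [MeasurableSpace X]
    [PseudoMetricSpace C] {μ : Measure X} {K : Set C} (hK : IsCompact K) {S : Set X}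
    (hS : MeasurableSet S) (hμS : μ S ≠ ∞) {f : C → X → ℝ} (hf : ∀ c, Measurable (f c))
    {L : ℝ≥0} (hL : ∀ x ∈ S, LipschitzWith L (f · x))
    (hzero : ∀ c ∈ K, μ {x ∈ S | f c x = 0} = 0) {ε : ℝ≥0∞} (hε : 0 < ε) :
    ∃ t > 0, ∀ c ∈ K, μ {x ∈ S | |f c x| ≤ t} < ε := by
  have hlocal : ∀ c ∈ K, ∀ᶠ z : ℝ × C in 𝓝 (0, c), μ {x ∈ S | |f z.2 x| ≤ z.1} < ε := by
    intro c hc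
    obtain ⟨s, hs, hsμ⟩ := exists_pos_measure_abs_le_lt hS hμS (hf c) (hzero c hc) hε
    have hnear : ∀ᶠ z : ℝ × C in 𝓝 (0, c), z.1 < s / 2 ∧ L * dist z.2 c < s / 2 := by
      have hcont : Continuous fun z : ℝ × C => (z.1, L * dist z.2 c) := by fun_prop
      have hlim := hcont.tendsto (0, c)
      simp only [dist_self, mul_zero] at hlim
      exact hlim.eventually
        (prod_mem_nhds (gt_mem_nhds (half_pos hs)) (gt_mem_nhds (half_pos hs)))
    -- near `(0, c)`, the `z.1`-sublevel set of `f z.2` lies in the `s`-sublevel set of `f c`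
    filter_upwards [hnear] with z hz
    refine (measure_mono ?_).trans_lt hsμ
    rintro x ⟨hxS, hx⟩
    refine ⟨hxS, ?_⟩
    have hlip := (hL x hxS).dist_le_mul c z.2
    rw [Real.dist_eq, dist_comm c] at hlip
    have := abs_sub_abs_le_abs_sub (f c x) (f z.2 x)
    linarith
  obtain ⟨t, ht, htpos⟩ :=
    (((hK.eventually_forall_of_forall_eventually (P := fun t c => μ {x ∈ S | |f c x| ≤ t} < ε)
      hlocal).filter_mono nhdsWithin_le_nhds).and (self_mem_nhdsWithin (s := Ioi 0))).exists
  exact ⟨t, htpos, ht⟩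

theorem MvPolynomial.volume_setOf_eval_eq_zero :
    ∀ {n : ℕ} {f : MvPolynomial (Fin n) ℝ}, f ≠ 0 → volume {x | eval x f = 0} = 0
  | 0, f, hf => by
    obtain ⟨r, rfl⟩ := C_surjective (Fin 0) f
    have hr : r ≠ 0 := by rintro rfl; exact hf C_0
    simp [hr]
  | n + 1, f, hf => by
    set g := finSuccEquiv ℝ n f
    have hg : g ≠ 0 := (map_ne_zero_iff _ (finSuccEquiv ℝ n).injective).mpr hf
    set S : Set (ℝ × (Fin n → ℝ)) := {p | eval (Fin.cons p.1 p.2) f = 0}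
    have hS : MeasurableSet S :=
      ((continuous_eval f).comp (by fun_prop)).measurable (measurableSet_singleton 0)
    -- off the null zero set of the leading coefficient of `g`, a slice of `S` is the root set
    -- of a nonzero one-variable polynomial
    have hslice : ∀ᵐ y : Fin n → ℝ, volume ((fun a => (a, y)) ⁻¹' S) = 0 := by
      filter_upwards [measure_eq_zero_iff_ae_notMem.mp
        (volume_setOf_eval_eq_zero (Polynomial.leadingCoeff_ne_zero.mpr hg))] with y hy
      have hgy : g.map (eval y) ≠ 0 := fun h => hy <| by
        simpa [Polynomial.coeff_map] using congrArg (Polynomial.coeff · g.natDegree) h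
      refine ((Polynomial.finite_setOfPred_isRoot hgy).subset fun a ha => ?_).measure_zero _
      simpa [S, eval_eq_eval_mv_eval'] using ha
    have hSnull : volume S = 0 := by
      rw [Measure.volume_eq_prod, Measure.prod_apply_symm hS, lintegral_congr_ae hslice,
        lintegral_zero]
    have hpre : {x : Fin (n + 1) → ℝ | eval x f = 0} =
        MeasurableEquiv.piFinSuccAbove (fun _ => ℝ) 0 ⁻¹' S := by
      ext x
      simp [S, Fin.insertNthEquiv_zero, Fin.consEquiv]
    rw [hpre, (volume_preserving_piFinSuccAbove (fun _ => ℝ) 0).measure_preimage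
      hS.nullMeasurableSet, hSnull]

namespace MIdx

variable {n k : ℕ}

def toFinsupp (p : MIdx n k) : Fin n →₀ ℕ :=
  Finsupp.equivFunOnFinite.symm fun t => p.1 t

lemma toFinsupp_injective : Function.Injective (toFinsupp (n := n) (k := k)) := by
  intro p q h
  ext t
  simpa [toFinsupp] using DFunLike.congr_fun h t

def mvPolynomial (c : MIdx n k → ℝ) : MvPolynomial (Fin n) ℝ :=
  ∑ p, MvPolynomial.monomial p.toFinsupp (c p)

lemma coeff_mvPolynomial (c : MIdx n k → ℝ) (p : MIdx n k) :
    (mvPolynomial c).coeff p.toFinsupp = c p := by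
  simp only [mvPolynomial, MvPolynomial.coeff_sum, MvPolynomial.coeff_monomial,
    toFinsupp_injective.eq_iff, Finset.sum_ite_eq', Finset.mem_univ, if_true]

lemma mvPolynomial_ne_zero {c : MIdx n k → ℝ} (hc : c ≠ 0) : mvPolynomial c ≠ 0 := by
  contrapose! hc
  ext p
  rw [← coeff_mvPolynomial c p, hc, MvPolynomial.coeff_zero, Pi.zero_apply]

end MIdx

section PolyFun

variable {n k : ℕ}

def polyFun (c : MIdx n k → ℝ) (x : Euc n) : ℝ :=
  ∑ p : MIdx n k, c p * ∏ t, x t ^ (p.1 t : ℕ)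

lemma polyFun_eq_eval (c : MIdx n k → ℝ) (x : Euc n) :
    polyFun c x = MvPolynomial.eval x.ofLp (MIdx.mvPolynomial c) := by
  simp [polyFun, MIdx.mvPolynomial, MvPolynomial.eval_monomial, Finsupp.prod_pow,
    MIdx.toFinsupp]

lemma continuous_polyFun (c : MIdx n k → ℝ) : Continuous (polyFun c) := by
  simp_rw [funext (polyFun_eq_eval c)]
  exact (MvPolynomial.continuous_eval _).comp (PiLp.continuous_ofLp 2 _)

lemma polyFun_smul (a : ℝ) (c : MIdx n k → ℝ) (x : Euc n) :
    polyFun (a • c) x = a * polyFun c x := by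
  simp [polyFun, Finset.mul_sum, mul_assoc]

lemma volume_polyFun_eq_zero {c : MIdx n k → ℝ} (hc : c ≠ 0) :
    volume {x : Euc n | polyFun c x = 0} = 0 := by
  simp_rw [polyFun_eq_eval]
  exact (PiLp.volume_preserving_ofLp (Fin n)).measure_preimage
    ((MvPolynomial.continuous_eval _).measurable (measurableSet_singleton 0)).nullMeasurableSet
    |>.trans (MvPolynomial.volume_setOf_eval_eq_zero (MIdx.mvPolynomial_ne_zero hc))

lemma lipschitzWith_polyFun {x : Euc n} (hx : ‖x‖ ≤ 1) :
    LipschitzWith (Fintype.card (MIdx n k)) fun c : MIdx n k → ℝ => polyFun c x := by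
  refine LipschitzWith.of_dist_le_mul fun c c' => ?_
  have hmono : ∀ p : MIdx n k, |∏ t, x t ^ (p.1 t : ℕ)| ≤ 1 := fun p => by
    rw [Finset.abs_prod]
    exact Finset.prod_le_one (fun _ _ => abs_nonneg _) fun t _ => by
      rw [abs_pow]
      exact pow_le_one₀ (abs_nonneg _) ((PiLp.norm_apply_le x t).trans hx)
  calc dist (polyFun c x) (polyFun c' x)
      = |∑ p : MIdx n k, (c p - c' p) * ∏ t, x t ^ (p.1 t : ℕ)| := by
        simp [Real.dist_eq, polyFun, ← Finset.sum_sub_distrib, sub_mul]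
    _ ≤ ∑ p : MIdx n k, |c p - c' p| * |∏ t, x t ^ (p.1 t : ℕ)| := by
        simpa only [abs_mul] using Finset.abs_sum_le_sum_abs
          (fun p : MIdx n k => (c p - c' p) * ∏ t, x t ^ (p.1 t : ℕ)) univ
    _ ≤ ∑ _p : MIdx n k, dist c c' := Finset.sum_le_sum fun p _ =>
        (mul_le_of_le_one_right (abs_nonneg _) (hmono p)).trans (dist_le_pi_dist c c' p)
    _ = Fintype.card (MIdx n k) * dist c c' := by simp

theorem exists_pos_volume_abs_polyFun_lt_mul_norm_lt (n k : ℕ) {ε : ℝ≥0∞} (hε : 0 < ε) :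
    ∃ t > 0, ∀ c : MIdx n k → ℝ,
      volume {x ∈ ball (0 : Euc n) 1 | |polyFun c x| < t * ‖c‖} < ε := by
  obtain ⟨t, ht, hsmall⟩ :=
    (isCompact_sphere (0 : MIdx n k → ℝ) 1).exists_pos_forall_measure_abs_le_lt
      measurableSet_ball measure_ball_lt_top.ne (fun c => (continuous_polyFun c).measurable)
      (fun x hx => lipschitzWith_polyFun (mem_ball_zero_iff.mp hx).le)
      (fun c hc => measure_mono_null (fun x hx => hx.2)
        (volume_polyFun_eq_zero (ne_zero_of_mem_sphere one_ne_zero ⟨c, hc⟩)))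
      hε
  refine ⟨t, ht, fun c => ?_⟩
  rcases eq_or_ne c 0 with rfl | hc
  · refine (measure_mono_null (fun x hx => ?_) measure_empty).trans_lt hε
    simpa using (abs_nonneg _).trans_lt hx.2
  -- homogeneity in `c` reduces to the unit vector `‖c‖⁻¹ • c`
  refine (measure_mono ?_).trans_lt
    (hsmall _ (mem_sphere_zero_iff_norm.mpr (norm_smul_inv_norm (𝕜 := ℝ) hc)))
  rintro x ⟨hx, hlt⟩
  refine ⟨hx, (lt_of_mul_lt_mul_left ?_ (norm_nonneg c)).le⟩
  rwa [polyFun_smul, RCLike.ofReal_real_eq_id, id, abs_mul, abs_inv, abs_norm,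
    mul_inv_cancel_left₀ (norm_ne_zero_iff.mpr hc), mul_comm]

theorem exists_pos_forall_half_le_volume_le_abs_polyFun (n k : ℕ) {A : ℝ} (hA : 0 < A) :
    ∃ t > 0, ∀ (c : MIdx n k → ℝ) (E : Set (Euc n)), E ⊆ ball 0 1 → A ≤ volume.real E →
      A / 2 ≤ volume.real (E ∩ {x | t * ‖c‖ ≤ |polyFun c x|}) := by
  obtain ⟨t, ht, hsmall⟩ :=
    exists_pos_volume_abs_polyFun_lt_mul_norm_lt n k (ENNReal.ofReal_pos.mpr (half_pos hA))
  refine ⟨t, ht, fun c E hEball hEA => ?_⟩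
  have hbad : volume.real (E \ {x | t * ‖c‖ ≤ |polyFun c x|}) < A / 2 := by
    refine ENNReal.toReal_lt_of_lt_ofReal ((measure_mono ?_).trans_lt (hsmall c))
    exact fun x hx => ⟨hEball hx.1, not_le.mp hx.2⟩
  have hsplit := measureReal_inter_add_sdiff (s := E)
    (measurableSet_le (measurable_const (a := t * ‖c‖)) (continuous_polyFun c).measurable.abs)
    (measure_ne_top_of_subset hEball (measure_ball_lt_top (μ := volume)).ne)
  linarith

end PolyFun

/-- single-valued key estimate (Campanato's Lemma 2.I).  If
`E ⊆ B_1(0) ⊆ ℝ^n` is measurable with `H^n(E) ≥ A > 0`, `P(x) = ∑_{|p| ≤ k} c_p x^p`,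
and `|c_{p'}| ≥ δ` for some multi-index `p'`, then `∫_E |P|^q ≥ C(n,k,q,A) δ^q`. -/
theorem single_polynomial_lower_bound (n k : ℕ) (qe A : ℝ) (hq : 1 ≤ qe) (hA : 0 < A) :
    ∃ C : ℝ, 0 < C ∧
      ∀ (c : MIdx n k → ℝ) (E : Set (Euc n)),
        MeasurableSet E → E ⊆ ball (0 : Euc n) 1 → A ≤ (volume E).toReal →
        ∀ (δ : ℝ) (p' : MIdx n k), 0 < δ → δ ≤ |c p'| →
          C * δ ^ qe ≤
            ∫ x in E, |∑ p : MIdx n k, c p * ∏ t, (x t) ^ ((p.1 t : ℕ))| ^ qe := by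
  obtain ⟨t, ht, hgood⟩ := exists_pos_forall_half_le_volume_le_abs_polyFun n k hA
  have hqe : 0 ≤ qe := zero_le_one.trans hq
  refine ⟨A / 2 * t ^ qe, by positivity, fun c E hE hEball hEA δ p' hδ hδc => ?_⟩
  change _ ≤ ∫ x in E, |polyFun c x| ^ qe
  set G := E ∩ {x | t * ‖c‖ ≤ |polyFun c x|}
  have hG : MeasurableSet G :=
    hE.inter (measurableSet_le measurable_const (continuous_polyFun c).measurable.abs)
  have hδt : ∀ x ∈ G, (δ * t) ^ qe ≤ |polyFun c x| ^ qe := fun x hx => by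
    refine Real.rpow_le_rpow (by positivity) (le_trans ?_ hx.2) hqe
    rw [mul_comm t]
    gcongr
    exact hδc.trans (norm_le_pi_norm c p')
  have hint : IntegrableOn (fun x => |polyFun c x| ^ qe) E :=
    (((continuous_polyFun c).abs.rpow_const fun _ => Or.inr hqe).continuousOn.integrableOn_compact
      (isCompact_closedBall 0 1)).mono_set (hEball.trans ball_subset_closedBall)
  calc A / 2 * t ^ qe * δ ^ qe = (δ * t) ^ qe * (A / 2) := by
        rw [Real.mul_rpow hδ.le ht.le]; ring
    _ ≤ (δ * t) ^ qe * volume.real G := by gcongr; exact hgood c E hEball hEA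
    _ ≤ ∫ x in G, |polyFun c x| ^ qe :=
        setIntegral_ge_of_const_le_real hG
          (measure_ne_top_of_subset (inter_subset_left.trans hEball) measure_ball_lt_top.ne) hδt
          (hint.mono_set inter_subset_left)
    _ ≤ ∫ x in E, |polyFun c x| ^ qe :=
        setIntegral_mono_set hint (ae_of_all _ fun _ => by positivity)
          inter_subset_left.eventuallyLE
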